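/- Fix reals L > 0, M > 0 and ν ∈ (0,1) with M > L·(1−ν). For a real N > 0 set λ = L/N and τ = M/N, and define Ŝ(N) = −λ·log λ − (1−λ)·log(1−λ) and Î(N) = λ(1−ν)·log((1−ν)/τ) + λν·log(ν/(1−τ)) + (τ − λ(1−ν))·log( (τ − λ(1−ν)) / ((1−λ)τ) ) + (1 − τ − λν)·log( (1 − τ − λν) / ((1−λ)(1−τ)) ). Then the information efficiency r̂(N) = Î(N)/Ŝ(N) converges to 1 − ν as N → ∞. -/

import Mathlib

/-!
Put `x = 1/N`, so that `λ = L x` and `τ = M x` with `x → 0`. Then `Ŝ = -L x log x + O(x)`, and in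
`Î` only the first term involves `log x`: after splitting off `-L (1 - ν) x log x`, what remains
of `Î` is a function of `x` that is differentiable at `0` and vanishes there, hence `O(x)`. Since
`x = o(x log x)`, the ratio `Î/Ŝ` tends to `L (1 - ν) / L = 1 - ν`.
-/

open Filter Real Asymptotics Topology

lemma isLittleO_self_mul_log : (fun x : ℝ => x) =o[𝓝[≠] 0] fun x => x * log x := by
  have h : (fun _ : ℝ => (1 : ℝ)) =o[𝓝[≠] 0] log :=
    (isLittleO_one_left_iff ℝ).2 (tendsto_abs_atBot_atTop.comp tendsto_log_nhdsNE_zero)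
  simpa using (isBigO_refl (fun x : ℝ => x) _).mul_isLittleO h

lemma eventually_mul_log_ne_zero : ∀ᶠ x : ℝ in 𝓝[≠] 0, x * log x ≠ 0 := by
  filter_upwards [self_mem_nhdsWithin, tendsto_log_nhdsNE_zero.eventually_ne_atBot 0]
    with x hx hlog using mul_ne_zero hx hlog

lemma tendsto_div_of_sub_const_mul_isLittleO {α : Type*} {l : Filter α} {u h : α → ℝ} {a : ℝ}
    (hh : ∀ᶠ x in l, h x ≠ 0) (hu : (fun x => u x - a * h x) =o[l] h) :
    Tendsto (fun x => u x / h x) l (𝓝 a) := by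
  have := hu.tendsto_div_nhds_zero.add_const a
  rw [zero_add] at this
  refine this.congr' (hh.mono fun x hx => ?_)
  field_simp
  ring

lemma tendsto_div_of_isBigO_sub_const_mul_mul_log {u v : ℝ → ℝ} {a b : ℝ} (hb : b ≠ 0)
    (hu : (fun x => u x - a * (x * log x)) =O[𝓝[≠] 0] fun x => x)
    (hv : (fun x => v x - b * (x * log x)) =O[𝓝[≠] 0] fun x => x) :
    Tendsto (fun x => u x / v x) (𝓝[≠] 0) (𝓝 (a / b)) := by
  have hu' := tendsto_div_of_sub_const_mul_isLittleO eventually_mul_log_ne_zero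
    (hu.trans_isLittleO isLittleO_self_mul_log)
  have hv' := tendsto_div_of_sub_const_mul_isLittleO eventually_mul_log_ne_zero
    (hv.trans_isLittleO isLittleO_self_mul_log)
  exact (hu'.div hv' hb).congr' (eventually_mul_log_ne_zero.mono fun x hx =>
    div_div_div_cancel_right₀ hx _ _)

lemma isBigO_id_of_differentiableAt {F : ℝ → ℝ} (hF : DifferentiableAt ℝ F 0) (h0 : F 0 = 0) :
    F =O[𝓝 0] fun x => x := by
  simpa [h0] using hF.isBigO_sub

noncomputable def binaryAlarmInfoGain (ν lam τ : ℝ) : ℝ :=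
  lam * (1 - ν) * log ((1 - ν) / τ) + lam * ν * log (ν / (1 - τ))
    + (τ - lam * (1 - ν)) * log ((τ - lam * (1 - ν)) / ((1 - lam) * τ))
    + (1 - τ - lam * ν) * log ((1 - τ - lam * ν) / ((1 - lam) * (1 - τ)))

lemma binEntropy_const_mul_sub_isBigO {L : ℝ} (hL : L ≠ 0) :
    (fun x => binEntropy (L * x) - -L * (x * log x)) =O[𝓝[≠] 0] fun x => x := by
  have hR : DifferentiableAt ℝ
      (fun x => x * (-L * log L) + (1 - L * x) * log (1 - L * x)⁻¹) 0 := by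
    fun_prop (disch := simp)
  refine ((isBigO_id_of_differentiableAt hR (by simp)).mono nhdsWithin_le_nhds).congr' ?_ .rfl
  filter_upwards [self_mem_nhdsWithin] with x (hx : x ≠ 0)
  rw [binEntropy, log_inv (L * x), log_mul hL hx]
  ring

lemma binaryAlarmInfoGain_const_mul_sub_isBigO {L M ν : ℝ} (hM : M ≠ 0) (hν₀ : ν ≠ 0)
    (hν₁ : 1 - ν ≠ 0) (hML : M - L * (1 - ν) ≠ 0) :
    (fun x => binaryAlarmInfoGain ν (L * x) (M * x) - -(L * (1 - ν)) * (x * log x))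
      =O[𝓝[≠] 0] fun x => x := by
  have hR : DifferentiableAt ℝ (fun x => x * (L * (1 - ν) * (log (1 - ν) - log M))
      + L * x * ν * log (ν / (1 - M * x))
      + x * (M - L * (1 - ν)) * log ((M - L * (1 - ν)) / ((1 - L * x) * M))
      + (1 - M * x - L * x * ν) *
          log ((1 - M * x - L * x * ν) / ((1 - L * x) * (1 - M * x)))) 0 := by
    fun_prop (disch := simp [*])
  refine ((isBigO_id_of_differentiableAt hR (by simp)).mono nhdsWithin_le_nhds).congr' ?_ .rfl
  filter_upwards [self_mem_nhdsWithin] with x (hx : x ≠ 0)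
  have hC : (M * x - L * x * (1 - ν)) / ((1 - L * x) * (M * x))
      = (M - L * (1 - ν)) / ((1 - L * x) * M) := by
    rw [← mul_div_mul_left (M - L * (1 - ν)) ((1 - L * x) * M) hx]
    congr 1 <;> ring
  rw [binaryAlarmInfoGain, hC, log_div hν₁ (mul_ne_zero hM hx), log_mul hM hx]
  ring

open Filter in
/-- In the binary-alarm setting with a fixed number `L` of event cells, a fixed number
`M` of alarmed cells and a fixed share `ν` of missed targets, the information efficiency
`r̂ = Î/Ŝ` converges to `1 - ν` as the total number of cells `N` tends to infinity. -/
theorem efficiency_tendsto_one_sub_nu (L M ν : ℝ)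
    (hL : 0 < L) (hM : 0 < M) (hν : ν ∈ Set.Ioo (0 : ℝ) 1)
    (hML : L * (1 - ν) < M) :
    Tendsto
      (fun N : ℝ =>
        (((L / N) * (1 - ν)) * Real.log ((1 - ν) / (M / N))
            + ((L / N) * ν) * Real.log (ν / (1 - M / N))
            + (M / N - (L / N) * (1 - ν)) *
                Real.log ((M / N - (L / N) * (1 - ν)) / ((1 - L / N) * (M / N)))
            + (1 - M / N - (L / N) * ν) *
                Real.log ((1 - M / N - (L / N) * ν) / ((1 - L / N) * (1 - M / N))))
          / (-((L / N) * Real.log (L / N)) - (1 - L / N) * Real.log (1 - L / N)))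
      atTop (nhds (1 - ν)) := by
  have hlim := tendsto_div_of_isBigO_sub_const_mul_mul_log (neg_ne_zero.2 hL.ne')
    (binaryAlarmInfoGain_const_mul_sub_isBigO hM.ne' hν.1.ne' (sub_ne_zero.2 hν.2.ne')
      (sub_ne_zero.2 hML.ne')) (binEntropy_const_mul_sub_isBigO hL.ne')
  rw [neg_div_neg_eq, mul_div_cancel_left₀ _ hL.ne'] at hlim
  refine (hlim.comp (tendsto_inv_atTop_nhdsGT_zero.mono_right (nhdsGT_le_nhdsNE 0))).congr
    fun N => ?_
  simp only [Function.comp_apply, ← div_eq_mul_inv, binaryAlarmInfoGain, binEntropy, log_inv]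
  ring
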